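/- Let a, b be coprime integers and let p be a prime dividing b. Consider the curve E obtained from E_{C₃}(a³, b): y² + a³xy + a⁶b·y = x³ by the change of variables x ↦ a⁴x + a⁴b, y ↦ a⁶y. Then the resulting Weierstrass coefficients a₃', a₄', a₆' are all divisible by p, and when p ∤ a the reduced quadratic t² + a₁'t − a₂' factors over 𝔽_p with distinct roots 0 and −a₁'; in particular E_{C₃}(a³,b) has split multiplicative reduction at p. -/

import Mathlib

/-- Let `a, b` be coprime integers and `p` a prime dividing
`b` with `p ∤ a` (so in particular `a ≠ 0`). Applying the admissible change of
variables `x ↦ a⁴x + a⁴b`, `y ↦ a⁶y` (i.e. `u = a²`, `r = a⁴b`, `s = t = 0`)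
to `E_{C₃}(a³, b) : y² + a³xy + a⁶b·y = x³` yields a Weierstrass model whose
coefficients `a₃' = b + ab`, `a₄' = 3b²`, `a₆' = b³` are all divisible by `p`,
whose reduced quadratic `t² + a₁'t − a₂' = t² + at − 3b` factors mod `p` as
`t·(t + a)` with distinct roots `0` and `−a` in `𝔽_p`; in particular
`E_{C₃}(a³, b)` has (split) multiplicative reduction at `p`:
`p ∣ Δ` and `p ∤ c₄`. -/
theorem stmt16 (a b : ℤ) (p : ℕ) (hp : p.Prime) (hab : IsCoprime a b)
    (hpb : (p : ℤ) ∣ b) (hpa : ¬ (p : ℤ) ∣ a) (ha : (a : ℚ) ≠ 0) :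
    let W : WeierstrassCurve ℚ :=
      { a₁ := (a : ℚ) ^ 3, a₂ := 0, a₃ := (a : ℚ) ^ 6 * b, a₄ := 0, a₆ := 0 }
    let C : WeierstrassCurve.VariableChange ℚ :=
      { u := Units.mk0 ((a : ℚ) ^ 2) (pow_ne_zero 2 ha),
        r := (a : ℚ) ^ 4 * b, s := 0, t := 0 }
    let W' := C • W
    let Wz : WeierstrassCurve ℤ :=
      { a₁ := a ^ 3, a₂ := 0, a₃ := a ^ 6 * b, a₄ := 0, a₆ := 0 }
    (W'.a₃ = ((b + a * b : ℤ) : ℚ) ∧ W'.a₄ = ((3 * b ^ 2 : ℤ) : ℚ) ∧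
      W'.a₆ = ((b ^ 3 : ℤ) : ℚ)) ∧
    ((p : ℤ) ∣ (b + a * b) ∧ (p : ℤ) ∣ 3 * b ^ 2 ∧ (p : ℤ) ∣ b ^ 3) ∧
    (∀ t : ZMod p,
      t ^ 2 + (a : ZMod p) * t - ((3 * b : ℤ) : ZMod p) = t * (t + (a : ZMod p))) ∧
    (a : ZMod p) ≠ 0 ∧
    ((p : ℤ) ∣ Wz.Δ ∧ ¬ (p : ℤ) ∣ Wz.c₄) := by
  intro W C W' Wz
  have hb0 : ((3 * b : ℤ) : ZMod p) = 0 := by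
    exact_mod_cast (ZMod.intCast_zmod_eq_zero_iff_dvd _ p).mpr (hpb.mul_left 3)
  have haz : (a : ZMod p) ≠ 0 := fun h =>
    hpa ((ZMod.intCast_zmod_eq_zero_iff_dvd _ p).mp h)
  obtain ⟨c, hc⟩ := id hpb
  have hpb' : (p : ℤ) ∣ b := ⟨c, hc⟩
  refine ⟨⟨?_, ?_, ?_⟩,
    ⟨⟨c * (1 + a), by rw [hc]; ring⟩, ⟨3 * c * b, by rw [hc]; ring⟩,
      ⟨c * b ^ 2, by rw [hc]; ring⟩⟩, ?_, haz, ?_, ?_⟩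
  · simp only [W', W, C, WeierstrassCurve.variableChange_a₃, Units.val_inv_eq_inv_val, Units.val_mk0]
    push_cast; field_simp; ring
  · simp only [W', W, C, WeierstrassCurve.variableChange_a₄, Units.val_inv_eq_inv_val, Units.val_mk0]
    push_cast; field_simp; ring
  · simp only [W', W, C, WeierstrassCurve.variableChange_a₆, Units.val_inv_eq_inv_val, Units.val_mk0]
    push_cast; field_simp; ring
  · intro t; rw [hb0]; ring
  · show (p:ℤ) ∣ Wz.Δ
    have : Wz.Δ = a ^ 24 * b ^ 3 * (a ^ 3 - 27 * b) := by
      simp [WeierstrassCurve.Δ, WeierstrassCurve.b₂, WeierstrassCurve.b₄,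
        WeierstrassCurve.b₆, WeierstrassCurve.b₈, Wz]; ring
    rw [this]
    exact ((hpb.pow (by norm_num)).mul_left _).mul_right _
  · show ¬ (p:ℤ) ∣ Wz.c₄
    have hc : Wz.c₄ = a ^ 9 * (a ^ 3 - 24 * b) := by
      simp [WeierstrassCurve.c₄, WeierstrassCurve.b₂, WeierstrassCurve.b₄, Wz]; ring
    rw [hc]
    intro h
    rcases (Int.Prime.dvd_mul' (by exact_mod_cast hp) h) with h1 | h2
    · exact hpa (Int.Prime.dvd_pow' (by exact_mod_cast hp) h1)
    · have : (p:ℤ) ∣ a ^ 3 := by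
        simpa using (dvd_add h2 (hpb.mul_left 24))
      exact hpa (Int.Prime.dvd_pow' (by exact_mod_cast hp) this)
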